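/- arXiv:1902.00593 — 4 statements merged into one kernel-verified Lean document; each statement's English description precedes it below -/
import Mathlib

section
/- Consider a birth–death Markov chain on states {0, 1, ..., n} where for 1 ≤ j ≤ n−1 the chain moves right (j → j+1) with probability q = 1−p and left (j → j−1) with probability p; from state 0 it moves to state 1 with probability q and self-loops with probability p; state n is absorbing. Each right/left transition takes 1 time unit, while each self-loop at state 0 takes Δ₀ time units. Let V₀ denote the expected total time to reach state n starting from state 0. Then V₀ = n/(1−2p) + (p/(1−2p))·(1 − (p/(1−p))ⁿ)·(Δ₀ − (2−2p)/(1−2p)), for 0 < p < 1/2. -/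
theorem birth_death_first_passage (p : ℝ) (hp : 0 < p) (hp2 : p < 1/2)
    (q : ℝ) (hq : q = 1 - p)
    (n : ℕ) (hn : 1 ≤ n)
    (Δ₀ : ℝ) (hΔ₀ : 0 ≤ Δ₀)
    (V : ℕ → ℝ)
    (hVn : V n = 0)
    (hinterior : ∀ j, 1 ≤ j → j ≤ n - 1 → V j = 1 + p * V (j - 1) + q * V (j + 1))
    (hV0 : V 0 = q + p * V 0 + q * V 1 + p * Δ₀) :
    V 0 = n / (1 - 2*p) +
      (p / (1 - 2*p)) * (1 - (p / (1 - p))^n) * (Δ₀ - (2 - 2*p) / (1 - 2*p)) := by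
  subst hq
  have h1p : (1:ℝ) - p ≠ 0 := by intro h; linarith
  have h12 : (1:ℝ) - 2*p ≠ 0 := by intro h; linarith
  set r := p / (1 - p) with hr
  have hrne : r ≠ 1 := by
    have hlt : r < 1 := by
      rw [hr, div_lt_one (by linarith : (0:ℝ) < 1 - p)]; linarith
    exact ne_of_lt hlt
  have hrn1 : r - 1 ≠ 0 := sub_ne_zero.mpr hrne
  -- polynomial form of the difference formula
  have hD : ∀ j, j ≤ n - 1 →
      (1-p)^(j+1) * (1-2*p) * (V j - V (j+1))
        = ((1-p)^j - p^j) * (1-p) + p^j * (1-p) * (1-2*p) + p^(j+1) * (1-2*p) * Δ₀ := by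
    intro j
    induction j with
    | zero =>
      intro _
      simp only [pow_zero, pow_one, zero_add]
      linear_combination (1-2*p) * hV0
    | succ j ih =>
      intro hjn
      have h1 : V (j+1) = 1 + p * V j + (1-p) * V (j + 2) := by
        have := hinterior (j+1) (by omega) (by omega)
        simpa using this
      have ihj := ih (by omega)
      linear_combination ((1-p)^(j+1) * (1-2*p)) * h1 + p * ihj
  -- rewrite each difference in summable form
  have hD' : ∀ j, j ≤ n - 1 → V j - V (j+1)
      = 1/(1-2*p) + ((1 + r * Δ₀) - 1/(1-2*p)) * r ^ j := by
    intro j hj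
    have h := hD j hj
    rw [hr, div_pow]
    have hpj : (1 - p) ^ j ≠ 0 := pow_ne_zero j h1p
    field_simp
    rw [pow_succ] at h
    linear_combination h
  have htel : V 0 = ∑ j ∈ Finset.range n, (V j - V (j+1)) := by
    rw [Finset.sum_range_sub' V, hVn, sub_zero]
  rw [htel,
    Finset.sum_congr rfl (fun j hj => hD' j (by simp at hj; omega)),
    Finset.sum_add_distrib, Finset.sum_const, ← Finset.mul_sum,
    Finset.card_range]
  have hne : p - (1 - p) ≠ 0 := by intro h; linarith
  have hgeo : ∑ j ∈ Finset.range n, r ^ j = (1 - p) * (1 - r ^ n) / (1 - 2*p) := by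
    rw [eq_div_iff h12, geom_sum_eq hrne, hr, div_pow]
    field_simp
    ring
  rw [hgeo, hr, div_pow]
  have hpn : (1 - p) ^ n ≠ 0 := pow_ne_zero n h1p
  rw [nsmul_eq_mul]
  field_simp
  ring
end

section
/- In the birth–death chain above, if the self-loop weight equals Δ₀* = (2−2p)/(1−2p), then the expected first-passage time from state 0 to state n equals n/(1−2p). -/
theorem birth_death_first_passage_random_walk (p : ℝ) (hp : 0 < p) (hp2 : p < 1/2)
    (q : ℝ) (hq : q = 1 - p)
    (n : ℕ) (hn : 1 ≤ n)
    (Δ₀ : ℝ) (hΔ₀ : Δ₀ = (2 - 2*p) / (1 - 2*p))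
    (V : ℕ → ℝ)
    (hVn : V n = 0)
    (hinterior : ∀ j, 1 ≤ j → j ≤ n - 1 → V j = 1 + p * V (j - 1) + q * V (j + 1))
    (hV0 : V 0 = q + p * V 0 + q * V 1 + p * Δ₀) :
    V 0 = n / (1 - 2*p) := by
  have h2p : (1 : ℝ) - 2*p ≠ 0 := by nlinarith
  have h1p : (1 : ℝ) - p ≠ 0 := by nlinarith
  subst hq hΔ₀
  -- difference lemma
  have hD : ∀ j : ℕ, j + 1 ≤ n → (1 - 2*p) * (V j - V (j+1)) = 1 := by
    intro j
    induction j with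
    | zero =>
      intro _
      have h := hV0
      field_simp at h
      have key : (1-p) * ((1 - 2*p) * (V 0 - V (0+1))) = (1-p) * 1 := by
        have e : p * ((2 - 2*p) / (1 - 2*p)) * (1 - 2*p) = p * (2 - 2*p) := by
          rw [mul_assoc, div_mul_cancel₀ _ h2p]
        linear_combination (1 - 2*p) * hV0 + e
      exact mul_left_cancel₀ h1p key
    | succ j ih =>
      intro hj2
      have hIH : (1 - 2*p) * (V j - V (j+1)) = 1 := ih (by omega)
      have hrec : V (j+1) = 1 + p * V j + (1-p) * V (j+2) := by
        have h := hinterior (j+1) (by omega) (by omega)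
        simpa using h
      have key : (1-p) * ((1 - 2*p) * (V (j+1) - V (j+2))) = (1-p) * 1 := by
        linear_combination (1 - 2*p) * hrec + p * hIH
      exact mul_left_cancel₀ h1p key
  -- telescoping
  have hT : ∀ k : ℕ, k ≤ n → (1 - 2*p) * V (n - k) = k := by
    intro k
    induction k with
    | zero => intro _; simp [hVn]
    | succ k ih =>
      intro hk
      have hIH := ih (by omega)
      have h1 : n - (k+1) + 1 = n - k := by omega
      have hd := hD (n - (k+1)) (by omega)
      rw [h1] at hd
      push_cast
      linear_combination hd + hIH
  have h0 := hT n le_rfl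
  simp at h0
  field_simp
  linarith
end

section
/- Suppose in a single channel use of BSC(p) the log-likelihood ratio of the true (transmitted) hypothesis i, U_i(t) = log₂(ρ_i(t)/(1−ρ_i(t))), satisfies U_i(t) ≥ 0 and the encoder sends the bit distinguishing {i} from its complement. Then U_i(t+1) = U_i(t) + C₂ with probability q = 1−p and U_i(t+1) = U_i(t) − C₂ with probability p, where C₂ = log₂((1−p)/p). In particular E[U_i(t+1) − U_i(t)] = q·C₂ − p·C₂ = C₁. -/
theorem llr_random_walk_confirmation (p : ℝ) (hp : 0 < p) (hp2 : p < 1/2)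
    (q C₁ C₂ : ℝ) (hq : q = 1 - p)
    (hC₂ : C₂ = Real.logb 2 ((1 - p) / p))
    (hC₁ : C₁ = (1 - 2*p) * C₂)
    (ρ : ℝ) (hρ0 : 0 < ρ) (hρ1 : ρ < 1)
    (U : ℝ) (hU : U = Real.logb 2 (ρ / (1 - ρ))) (hUpos : 0 ≤ U)
    (ρgood ρbad : ℝ)
    (hgood : ρgood = ρ * q / (ρ * q + (1 - ρ) * p))
    (hbad : ρbad = ρ * p / (ρ * p + (1 - ρ) * q)) :
    Real.logb 2 (ρgood / (1 - ρgood)) = U + C₂ ∧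
      Real.logb 2 (ρbad / (1 - ρbad)) = U - C₂ ∧
      q * (U + C₂) + p * (U - C₂) - U = C₁ := by
  subst hq
  have hq0 : 0 < 1 - p := by linarith
  have h1ρ : 0 < 1 - ρ := by linarith
  have hD1 : 0 < ρ * (1 - p) + (1 - ρ) * p := by positivity
  have hD2 : 0 < ρ * p + (1 - ρ) * (1 - p) := by positivity
  have h1g : 1 - ρgood = (1 - ρ) * p / (ρ * (1 - p) + (1 - ρ) * p) := by
    rw [hgood]; field_simp; ring
  have h1b : 1 - ρbad = (1 - ρ) * (1 - p) / (ρ * p + (1 - ρ) * (1 - p)) := by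
    rw [hbad]; field_simp; ring
  have hr1 : ρgood / (1 - ρgood) = (ρ / (1 - ρ)) * ((1 - p) / p) := by
    rw [h1g, hgood, div_div_div_eq, div_mul_div_comm,
      div_eq_div_iff (ne_of_gt (mul_pos hD1 (mul_pos h1ρ hp))) (ne_of_gt (mul_pos h1ρ hp))]
    ring
  have hr2 : ρbad / (1 - ρbad) = (ρ / (1 - ρ)) * (p / (1 - p)) := by
    rw [h1b, hbad, div_div_div_eq, div_mul_div_comm,
      div_eq_div_iff (ne_of_gt (mul_pos hD2 (mul_pos h1ρ hq0))) (ne_of_gt (mul_pos h1ρ hq0))]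
    ring
  have hρne : ρ / (1 - ρ) ≠ 0 := by positivity
  have hqp : (1 - p) / p ≠ 0 := ne_of_gt (div_pos hq0 hp)
  have hpq : p / (1 - p) ≠ 0 := ne_of_gt (div_pos hp hq0)
  refine ⟨?_, ?_, ?_⟩
  · rw [hr1, Real.logb_mul hρne hqp, hU, hC₂]
  · rw [hr2, Real.logb_mul hρne hpq, hU, hC₂]
    have : Real.logb 2 (p / (1 - p)) = - Real.logb 2 ((1 - p) / p) := by
      rw [← Real.logb_inv, inv_div]
    rw [this]; ring
  · rw [hC₁]; ring
end

section
/- For the BSC(p) with 0 < p < 1/2, M ≥ 2, 0 < ε < 1/2, the bound of Theorem 2, L₂ = log₂(M)/C + ⌈log₂((1−ε)/ε)/C₂⌉·C₂/C₁ + (p·C₂/C₁)·((C₁+C₂)/C − C₂/C₁) + C₁/C, is strictly less than the bound of Corollary 1, L_c = log₂(M)/C + log₂((1−ε)/ε)/C₁ + 3C₂²/(C·C₁). -/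
set_option maxHeartbeats 1000000 in
theorem thm2_tighter_than_cor1 (p : ℝ) (hp : 0 < p) (hp2 : p < 1/2)
    (M : ℕ) (hM : 2 ≤ M)
    (ε : ℝ) (hε : 0 < ε) (hε2 : ε < 1/2)
    (C C₁ C₂ : ℝ)
    (hC : C = 1 - (-p * Real.logb 2 p - (1 - p) * Real.logb 2 (1 - p)))
    (hC₁ : C₁ = p * Real.logb 2 (p / (1 - p)) + (1 - p) * Real.logb 2 ((1 - p) / p))
    (hC₂ : C₂ = Real.logb 2 ((1 - p) / p)) :
    Real.logb 2 M / C + (⌈Real.logb 2 ((1 - ε) / ε) / C₂⌉₊ : ℝ) * C₂ / C₁ +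
        (p * C₂ / C₁) * ((C₁ + C₂) / C - C₂ / C₁) + C₁ / C <
      Real.logb 2 M / C + Real.logb 2 ((1 - ε) / ε) / C₁ + 3 * C₂^2 / (C * C₁) := by
  have hq : 0 < 1 - p := by linarith
  have hl2 : (0:ℝ) < Real.log 2 := Real.log_pos (by norm_num)
  set L2 := Real.log 2 with hL2
  set lp := Real.log p with hlp
  set lq := Real.log (1 - p) with hlq
  -- C₂ > 0
  have hr1 : 1 < (1 - p)/p := (one_lt_div hp).mpr (by linarith)
  have hC2pos : 0 < C₂ := hC₂ ▸ Real.logb_pos (by norm_num) hr1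
  -- C₁ = (1 - 2p) C₂
  have hC1eq : C₁ = (1 - 2*p) * C₂ := by
    rw [hC₁, hC₂, show p/(1-p) = ((1-p)/p)⁻¹ from (inv_div _ _).symm, Real.logb_inv]
    ring
  have hC1pos : 0 < C₁ := by rw [hC1eq]; exact mul_pos (by linarith) hC2pos
  have hC1leC2 : C₁ ≤ C₂ := by nlinarith [hC2pos]
  -- log inequalities
  have hA : L2 + lp < 2*p - 1 := by
    have h := Real.log_lt_sub_one_of_pos (show (0:ℝ) < 2*p by linarith)
      (by intro h; linarith)
    rw [Real.log_mul (by norm_num) hp.ne'] at h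
    linarith
  have hB : L2 + lq < 1 - 2*p := by
    have h := Real.log_lt_sub_one_of_pos (show (0:ℝ) < 2*(1-p) by linarith)
      (by intro h; nlinarith)
    rw [Real.log_mul (by norm_num) hq.ne'] at h
    linarith
  have hA' : p * (L2 + lp) > p - 1/2 := by
    have h := Real.log_lt_sub_one_of_pos (show (0:ℝ) < (2*p)⁻¹ by positivity)
      (by intro h; rw [inv_eq_one] at h; linarith)
    rw [Real.log_inv, Real.log_mul (by norm_num) hp.ne'] at h
    have h2 : (2*p)⁻¹ = 1/(2*p) := by rw [one_div]
    rw [h2] at h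
    have h3 : p * (-(L2 + lp)) < p * (1/(2*p) - 1) := by
      apply mul_lt_mul_of_pos_left _ hp
      linarith
    have h4 : p * (1/(2*p) - 1) = 1/2 - p := by field_simp
    nlinarith
  have hB' : (1 - p) * (L2 + lq) > 1/2 - p := by
    have h := Real.log_lt_sub_one_of_pos (show (0:ℝ) < (2*(1-p))⁻¹ by positivity)
      (by intro h; rw [inv_eq_one] at h; nlinarith)
    rw [Real.log_inv, Real.log_mul (by norm_num) hq.ne'] at h
    have h3 : (1-p) * (-(L2 + lq)) < (1-p) * (1/(2*(1-p)) - 1) :=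
      mul_lt_mul_of_pos_left (by rw [one_div]; linarith) hq
    have h4 : (1-p) * (1/(2*(1-p)) - 1) = 1/2 - (1-p) := by field_simp
    nlinarith
  -- key identities
  have eC : C * L2 = L2 + p * lp + (1 - p) * lq := by
    rw [hC]; simp only [Real.logb]; field_simp; ring
  have e2 : C₂ * L2 = lq - lp := by
    rw [hC₂, Real.logb, Real.log_div hq.ne' hp.ne']; field_simp
    rw [← hlq, ← hlp, ← hL2]; ring
  -- C > 0
  have hCL : 0 < C * L2 := by nlinarith [hA', hB']
  have hCpos : 0 < C := by
    rcases mul_pos_iff.mp hCL with ⟨h, _⟩ | ⟨_, h⟩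
    · exact h
    · linarith
  -- C ≤ C₁
  have hkey : 0 < (C₁ - C) * L2 := by
    have e1 : (C₁ - C) * L2 = -(p*lq) - (1-p)*lp - L2 := by
      rw [hC1eq]; linear_combination (1-2*p)*e2 - eC
    nlinarith [mul_lt_mul_of_pos_left hB hp, mul_lt_mul_of_pos_left hA hq]
  have hCleC1 : C ≤ C₁ := by
    by_contra h
    push_neg at h
    nlinarith [mul_nonneg (sub_nonneg.mpr h.le) hl2.le]
  -- x part
  set x := Real.logb 2 ((1 - ε) / ε) with hx
  have hxpos : 0 < x := Real.logb_pos (by norm_num) ((one_lt_div hε).mpr (by linarith))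
  set N := (⌈x / C₂⌉₊ : ℝ) with hN
  have hceil : N < x / C₂ + 1 := Nat.ceil_lt_add_one (by positivity)
  have hNC : N * C₂ < x + C₂ := by
    have h := mul_lt_mul_of_pos_right hceil hC2pos
    have h2 : (x / C₂ + 1) * C₂ = x + C₂ := by field_simp
    linarith
  -- final inequality
  have hCne : C ≠ 0 := hCpos.ne'
  have hC1ne : C₁ ≠ 0 := hC1pos.ne'
  have main : N * C₂ / C₁ + (p * C₂ / C₁) * ((C₁ + C₂) / C - C₂ / C₁) + C₁ / C <
      x / C₁ + 3 * C₂^2 / (C * C₁) := by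
    rw [← sub_pos]
    have heq : x / C₁ + 3 * C₂^2 / (C * C₁) -
        (N * C₂ / C₁ + (p * C₂ / C₁) * ((C₁ + C₂) / C - C₂ / C₁) + C₁ / C) =
        (x*C*C₁ + 3*C₂^2*C₁ - N*C₂*C*C₁ - p*C₂*C₁^2 - p*C₂^2*C₁ + p*C₂^2*C - C₁^3)
          / (C * C₁^2) := by
      field_simp
      ring
    rw [heq]
    apply div_pos _ (by positivity)
    nlinarith [mul_pos (mul_pos hCpos hC1pos) (show 0 < x + C₂ - N*C₂ by linarith),
      mul_nonneg (mul_nonneg (sub_nonneg.mpr (le_trans hCleC1 hC1leC2)) hC2pos.le) hC1pos.le,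
      mul_nonneg (mul_nonneg (mul_nonneg hp.le (sub_nonneg.mpr hC1leC2)) hC2pos.le) hC1pos.le,
      mul_pos (mul_pos (show (0:ℝ) < 1 - 2*p by linarith) (mul_pos hC2pos hC2pos)) hC1pos,
      mul_pos (mul_pos hp (mul_pos hC2pos hC2pos)) hCpos,
      mul_nonneg (mul_nonneg (sub_nonneg.mpr hC1leC2) (by positivity : (0:ℝ) ≤ C₂ + C₁)) hC1pos.le]
  linarith
end
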